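/- The curve C₆ = {F₆ = 0} ⊂ P² (with F₆ as in the Appendix) has a node (ordinary double point) at the point p₀ = [0:0:1]. -/

import Mathlib

/-!
In the chart z = 1 the polynomial F₆ is a sum of binary forms of degrees 2 through 6, so p₀ has
multiplicity 2 and its tangent cone is 900x² - 9225y² = 225(4x² - 41y²), whose discriminant
4 · 900 · 9225 is nonzero.
-/

open MvPolynomial

/-- F₆ in the affine chart z = 1, in coordinates centered at p₀ = [0:0:1]. -/
noncomputable def f₆ : MvPolynomial (Fin 2) ℚ :=
  let x : MvPolynomial (Fin 2) ℚ := X 0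
  let y : MvPolynomial (Fin 2) ℚ := X 1
  4*x^6 - 273*x^4*y^2 - 258*x^2*y^4 - 481*y^6 + 720*x^4*y + 1740*x^2*y^3 +
  4020*y^5 - 520*x^4 - 3190*x^2*y^2 - 12670*y^4 + 1200*x^2*y +
  17700*y^3 + 900*x^2 - 9225*y^2

namespace MvPolynomial

variable {R σ : Type*} [CommSemiring R]

theorem monomial_single_add_single (i j : σ) (a b : ℕ) (r : R) :
    monomial (Finsupp.single i a + Finsupp.single j b) r = C r * X i ^ a * X j ^ b := by
  rw [monomial_add_single, ← C_mul_X_pow_eq_monomial]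

noncomputable def binaryForm (n : ℕ) (c : Fin (n + 1) → R) : MvPolynomial (Fin 2) R :=
  ∑ k : Fin (n + 1), monomial (Finsupp.single 0 (n - k) + Finsupp.single 1 (k : ℕ)) (c k)

theorem isHomogeneous_binaryForm (n : ℕ) (c : Fin (n + 1) → R) :
    (binaryForm n c).IsHomogeneous n :=
  IsHomogeneous.sum _ _ _ fun k _ => isHomogeneous_monomial _ <| by
    rw [map_add, Finsupp.degree_single, Finsupp.degree_single, Nat.sub_add_cancel k.is_le]

theorem homogeneousComponent_binaryForm (m n : ℕ) (c : Fin (n + 1) → R) :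
    homogeneousComponent m (binaryForm n c) = if m = n then binaryForm n c else 0 :=
  homogeneousComponent_of_mem (isHomogeneous_binaryForm n c)

theorem coeff_binaryForm {n a : ℕ} (c : Fin (n + 1) → R) (k : Fin (n + 1)) (h : a + k = n) :
    coeff (Finsupp.single 0 a + Finsupp.single 1 (k : ℕ)) (binaryForm n c) = c k := by
  rw [binaryForm, coeff_sum, Finset.sum_eq_single k]
  · rw [coeff_monomial, if_pos (by congr 2; omega)]
  · intro j _ hjk
    rw [coeff_monomial, if_neg]
    intro hj
    have hexp : (j : ℕ) = k := by simpa using DFunLike.congr_fun hj 1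
    exact hjk (Fin.ext hexp)
  · simp

end MvPolynomial

theorem f₆_eq_sum_binaryForm :
    f₆ = binaryForm 2 ![900, 0, -9225] + binaryForm 3 ![0, 1200, 0, 17700] +
      binaryForm 4 ![-520, 0, -3190, 0, -12670] + binaryForm 5 ![0, 720, 0, 1740, 0, 4020] +
      binaryForm 6 ![4, 0, -273, 0, -258, 0, -481] := by
  simp only [binaryForm, monomial_single_add_single, Fin.sum_univ_succ, Fin.sum_univ_zero,
    Fin.val_zero, Fin.val_succ, Matrix.cons_val_zero, Matrix.cons_val_succ]
  norm_num [f₆, map_ofNat]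
  ring

theorem homogeneousComponent_f₆_of_lt_two {m : ℕ} (hm : m < 2) : homogeneousComponent m f₆ = 0 := by
  simp only [f₆_eq_sum_binaryForm, map_add, homogeneousComponent_binaryForm]
  split_ifs <;> first | omega | simp

theorem homogeneousComponent_two_f₆ :
    homogeneousComponent 2 f₆ = binaryForm 2 ![900, 0, -9225] := by
  simp [f₆_eq_sum_binaryForm, homogeneousComponent_binaryForm]

/-- C₆ has a node at p₀ = [0:0:1]: multiplicity exactly 2, and the degree-2 part
a·x² + b·xy + c·y² is a nondegenerate quadratic form (b² - 4ac ≠ 0). -/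
theorem stmt15 :
    homogeneousComponent 0 f₆ = 0 ∧
    homogeneousComponent 1 f₆ = 0 ∧
    homogeneousComponent 2 f₆ ≠ 0 ∧
    (coeff (Finsupp.single (0 : Fin 2) 1 + Finsupp.single (1 : Fin 2) 1)
        (homogeneousComponent 2 f₆)) ^ 2 -
      4 * coeff (Finsupp.single (0 : Fin 2) 2) (homogeneousComponent 2 f₆) *
        coeff (Finsupp.single (1 : Fin 2) 2) (homogeneousComponent 2 f₆) ≠ 0 := by
  have hxx : coeff (Finsupp.single 0 2) (homogeneousComponent 2 f₆) = 900 := by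
    simpa [homogeneousComponent_two_f₆] using coeff_binaryForm ![(900 : ℚ), 0, -9225] 0 rfl
  have hxy : coeff (Finsupp.single 0 1 + Finsupp.single 1 1) (homogeneousComponent 2 f₆) = 0 := by
    simpa [homogeneousComponent_two_f₆] using coeff_binaryForm ![(900 : ℚ), 0, -9225] 1 rfl
  have hyy : coeff (Finsupp.single 1 2) (homogeneousComponent 2 f₆) = -9225 := by
    simpa [homogeneousComponent_two_f₆] using coeff_binaryForm ![(900 : ℚ), 0, -9225] 2 rfl
  refine ⟨homogeneousComponent_f₆_of_lt_two (by norm_num),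
    homogeneousComponent_f₆_of_lt_two (by norm_num),
    ne_zero_iff.mpr ⟨Finsupp.single 0 2, by norm_num [hxx]⟩, ?_⟩
  rw [hxx, hxy, hyy]
  norm_num
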